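/- arXiv:math/0501064 — 3 statements merged into one kernel-verified Lean document; each statement's English description precedes it below -/
import Mathlib

section
/- Let D be a non-commutative division ring. Then the smallest division subring of D containing all multiplicative commutators [x,y] = xyx⁻¹y⁻¹ (for x, y nonzero) is D itself. -/
/-- In a non-commutative division ring, the smallest division subring containing
all multiplicative commutators is the whole ring: no proper division subring
(a subring closed under inverses) contains all commutators. -/
theorem stmt_0 (D : Type*) [DivisionRing D] (hnc : ∃ x y : D, x * y ≠ y * x)
    (S : Subring D) (hinv : ∀ x ∈ S, x⁻¹ ∈ S)
    (hcomm : ∀ x y : D, x ≠ 0 → y ≠ 0 → x * y * x⁻¹ * y⁻¹ ∈ S) :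
    S = ⊤ := by
  by_contra hST
  obtain ⟨b, hb⟩ : ∃ b : D, b ∉ S := by
    by_contra h
    push_neg at h
    exact hST ((Subring.eq_top_iff' S).mpr h)
  -- conjugation stability
  have hconj : ∀ a ∈ S, ∀ x : D, x ≠ 0 → x * a * x⁻¹ ∈ S := by
    intro a ha x hx
    rcases eq_or_ne a 0 with rfl | ha0
    · simpa using S.zero_mem
    · have h1 := S.mul_mem (hcomm x a hx ha0) ha
      have h2 : x * a * x⁻¹ * a⁻¹ * a = x * a * x⁻¹ := by
        rw [mul_assoc, inv_mul_cancel₀ ha0, mul_one]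
      rwa [h2] at h1
  -- every element not in S commutes with every element of S
  have hA : ∀ b' : D, b' ∉ S → ∀ a ∈ S, b' * a = a * b' := by
    intro b hb a ha
    rcases eq_or_ne a 0 with rfl | ha0
    · simp
    have hb0 : b ≠ 0 := fun h => hb (h ▸ S.zero_mem)
    have hb1 : (1 : D) + b ≠ 0 := by
      intro h
      have : b = -1 := by
        have := eq_neg_of_add_eq_zero_right h
        exact this
      exact hb (this ▸ S.neg_mem S.one_mem)
    set s := b * a * b⁻¹ with hs_def
    set t := (1 + b) * a * (1 + b)⁻¹ with ht_def
    have hs : s ∈ S := hconj a ha b hb0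
    have ht : t ∈ S := hconj a ha (1 + b) hb1
    have hsb : s * b = b * a := by
      rw [hs_def, mul_assoc, inv_mul_cancel₀ hb0, mul_one]
    have htb : t * (1 + b) = (1 + b) * a := by
      rw [ht_def, mul_assoc, inv_mul_cancel₀ hb1, mul_one]
    have h1 : t + t * b = a + s * b := by
      calc t + t * b = t * (1 + b) := by rw [mul_add, mul_one]
        _ = (1 + b) * a := htb
        _ = a + b * a := by rw [add_mul, one_mul]
        _ = a + s * b := by rw [hsb]
    by_cases hst : s = t
    · rw [hst] at h1
      have hta : t = a := by
        have := add_right_cancel h1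
        exact this
      rw [hst, hta] at hsb
      exact hsb.symm
    · exfalso
      have key : (s - t) * b = t - a := by
        rw [sub_mul, sub_eq_sub_iff_add_eq_add, add_comm (s * b) a]
        exact h1.symm
      have hst0 : s - t ≠ 0 := sub_ne_zero.mpr hst
      have : b = (s - t)⁻¹ * (t - a) := by
        rw [← key, ← mul_assoc, inv_mul_cancel₀ hst0, one_mul]
      exact hb (this ▸ S.mul_mem (hinv _ (S.sub_mem hs ht)) (S.sub_mem ht ha))
  -- every element of S is central
  have hcent : ∀ a ∈ S, ∀ d : D, a * d = d * a := by
    intro a ha d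
    by_cases hd : d ∈ S
    · have h1 := hA b hb a ha
      have hdb : d + b ∉ S := by
        intro h
        exact hb (by simpa using S.sub_mem h hd)
      have h2 := hA (d + b) hdb a ha
      have h3 : d * a + b * a = a * d + a * b := by
        rw [← add_mul, ← mul_add]
        exact h2
      rw [h1] at h3
      exact (add_right_cancel h3).symm
    · exact (hA d hd a ha).symm
  -- derive contradiction: all commutators central ⇒ D commutative
  obtain ⟨x, y, hxy⟩ := hnc
  have hx0 : x ≠ 0 := fun h => hxy (by simp [h])
  have hy0 : y ≠ 0 := fun h => hxy (by simp [h])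
  set c := x * y * x⁻¹ * y⁻¹ with hc_def
  have hc : c ∈ S := hcomm x y hx0 hy0
  have hcy : c * y = x * y * x⁻¹ := by
    rw [hc_def, mul_assoc, inv_mul_cancel₀ hy0, mul_one]
  have hcyx : c * (y * x) = x * y := by
    rw [← mul_assoc, hcy, mul_assoc, inv_mul_cancel₀ hx0, mul_one]
  have hc1 : c ≠ 1 := by
    intro h
    rw [h, one_mul] at hcyx
    exact hxy hcyx.symm
  have hy1 : (1 : D) + y ≠ 0 := by
    intro h
    have hy : y = -1 := eq_neg_of_add_eq_zero_right h
    apply hxy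
    rw [hy]
    simp
  set c' := x * (1 + y) * x⁻¹ * (1 + y)⁻¹ with hc'_def
  have hc' : c' ∈ S := hcomm x (1 + y) hx0 hy1
  have key2 : c' + c' * y = 1 + c * y := by
    calc c' + c' * y = c' * (1 + y) := by rw [mul_add, mul_one]
      _ = x * (1 + y) * x⁻¹ := by
          rw [hc'_def, mul_assoc, inv_mul_cancel₀ hy1, mul_one]
      _ = 1 + x * y * x⁻¹ := by
          rw [mul_add, mul_one, add_mul, mul_inv_cancel₀ hx0]
      _ = 1 + c * y := by rw [hcy]
  have keyeq : (c - c') * y = c' - 1 := by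
    rw [sub_mul, sub_eq_sub_iff_add_eq_add, add_comm (c * y) 1]
    exact key2.symm
  by_cases hc'1 : c' = 1
  · rw [hc'1, sub_self] at keyeq
    have : c - 1 = 0 := by
      rcases mul_eq_zero.mp keyeq with h | h
      · exact h
      · exact absurd h hy0
    exact hc1 (by rwa [sub_eq_zero] at this)
  · have hcc' : c - c' ≠ 0 := by
      intro h
      rw [h, zero_mul] at keyeq
      exact hc'1 (by rw [eq_comm, sub_eq_zero] at keyeq; exact keyeq.symm ▸ rfl)
    have hyval : y = (c - c')⁻¹ * (c' - 1) := by
      rw [← keyeq, ← mul_assoc, inv_mul_cancel₀ hcc', one_mul]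
    have hcx := hcent c hc x
    have hc'x := hcent c' hc' x
    have h1 : (c - c') * x = x * (c - c') := by rw [sub_mul, mul_sub, hcx, hc'x]
    have h2 : (c - c')⁻¹ * x = x * (c - c')⁻¹ := by
      have hcomm1 : Commute (c - c') x := h1
      exact hcomm1.inv_left₀.eq
    have h3 : (c' - 1) * x = x * (c' - 1) := by
      rw [sub_mul, mul_sub, hc'x, one_mul, mul_one]
    apply hxy
    rw [hyval, mul_assoc, h3, ← mul_assoc, ← h2, ← mul_assoc]
end

section
/- Let D be a division ring and S a division subring of D that is closed under all conjugations x ↦ axa⁻¹ by nonzero elements a of D. Then either S is contained in the center of D, or S = D. (Cartan–Brauer–Hua theorem.) -/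
/-- Key step for Cartan–Brauer–Hua: any element of the invariant division
subring commutes with any element outside of it. -/
theorem cbh_comm (D : Type*) [DivisionRing D] (S : Subring D)
    (hinv : ∀ x ∈ S, x⁻¹ ∈ S)
    (hconj : ∀ a : D, a ≠ 0 → ∀ s ∈ S, a * s * a⁻¹ ∈ S)
    {s x : D} (hs : s ∈ S) (hx : x ∉ S) : x * s = s * x := by
  have hx0 : x ≠ 0 := fun h => hx (h ▸ S.zero_mem)
  have hx1 : (1 : D) + x ≠ 0 := by
    intro h
    apply hx
    have : x = -1 := by rwa [add_comm, add_eq_zero_iff_eq_neg] at h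
    rw [this]; exact S.neg_mem S.one_mem
  set t := x * s * x⁻¹ with ht
  set u := (1 + x) * s * (1 + x)⁻¹ with hu
  have htS : t ∈ S := hconj x hx0 s hs
  have huS : u ∈ S := hconj (1 + x) hx1 s hs
  have htx : t * x = x * s := by
    rw [ht, mul_assoc, inv_mul_cancel₀ hx0, mul_one]
  have hux : u * (1 + x) = (1 + x) * s := by
    rw [hu, mul_assoc, inv_mul_cancel₀ hx1, mul_one]
  have hsum : u + u * x = s + t * x := by
    rw [htx]
    calc u + u * x = u * (1 + x) := by rw [mul_add, mul_one]
      _ = (1 + x) * s := hux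
      _ = s + x * s := by rw [add_mul, one_mul]
  have key : u - s = (t - u) * x := by
    rw [sub_mul, sub_eq_sub_iff_add_eq_add, add_comm (t * x) s]
    exact hsum
  have htu : t = u := by
    by_contra hne
    apply hx
    have h1 : t - u ≠ 0 := sub_ne_zero_of_ne hne
    have : x = (t - u)⁻¹ * (u - s) := by
      rw [key, ← mul_assoc, inv_mul_cancel₀ h1, one_mul]
    rw [this]
    exact S.mul_mem (hinv _ (S.sub_mem htS huS)) (S.sub_mem huS hs)
  have hus : u = s := by
    have : u - s = 0 := by rw [key, htu, sub_self, zero_mul]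
    exact sub_eq_zero.mp this
  rw [← htx, htu, hus]

/-- Cartan–Brauer–Hua: a division subring of a division ring that is invariant
under all conjugations is either central or the whole ring. -/
theorem stmt_1 (D : Type*) [DivisionRing D] (S : Subring D)
    (hinv : ∀ x ∈ S, x⁻¹ ∈ S)
    (hconj : ∀ a : D, a ≠ 0 → ∀ s ∈ S, a * s * a⁻¹ ∈ S) :
    S ≤ Subring.center D ∨ S = ⊤ := by
  by_cases hc : S ≤ Subring.center D
  · exact Or.inl hc
  · right
    obtain ⟨s, hs, hsc⟩ := SetLike.not_le_iff_exists.mp hc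
    rw [Subring.mem_center_iff] at hsc
    push_neg at hsc
    obtain ⟨y, hy⟩ := hsc
    have hyS : y ∈ S := by
      by_contra hyn
      exact hy (cbh_comm D S hinv hconj hs hyn)
    rw [eq_top_iff]
    intro x _
    by_contra hxn
    have hxy : x + y ∉ S := fun h => hxn (by
      rw [(add_sub_cancel_right x y).symm]; exact S.sub_mem h hyS)
    have h1 : x * s = s * x := cbh_comm D S hinv hconj hs hxn
    have h2 : (x + y) * s = s * (x + y) := cbh_comm D S hinv hconj hs hxy
    apply hy
    have h3 : x * s + y * s = s * x + s * y := by
      rw [← add_mul, ← mul_add]; exact h2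
    rw [h1] at h3
    exact add_left_cancel h3
end

section
/- Let D be a division ring in which every multiplicative commutator xyx⁻¹y⁻¹ (x, y nonzero) lies in the center of D. Then D is commutative. -/
/-- A division ring in which every multiplicative commutator is central is commutative. -/
theorem stmt_2 (D : Type*) [DivisionRing D]
    (h : ∀ x y : D, x ≠ 0 → y ≠ 0 → x * y * x⁻¹ * y⁻¹ ∈ Subring.center D) :
    ∀ x y : D, x * y = y * x := by
  intro x y
  rcases eq_or_ne x 0 with rfl | hx
  · simp
  rcases eq_or_ne y 0 with rfl | hy
  · simp
  rcases eq_or_ne y (-1) with rfl | hy1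
  · rw [mul_neg_one, neg_one_mul]
  have hy1' : y + 1 ≠ 0 := fun h0 => hy1 (eq_neg_of_add_eq_zero_left h0)
  set c := x * y * x⁻¹ * y⁻¹ with hcdef
  set c' := x * (y + 1) * x⁻¹ * (y + 1)⁻¹ with hc'def
  have hc : ∀ g : D, g * c = c * g := Subring.mem_center_iff.mp (h x y hx hy)
  have hc' : ∀ g : D, g * c' = c' * g := Subring.mem_center_iff.mp (h x (y + 1) hx hy1')
  have hc1 : c * y = x * y * x⁻¹ := by
    rw [hcdef, inv_mul_cancel_right₀ hy]
  have hc'1 : c' * (y + 1) = x * y * x⁻¹ + 1 := by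
    rw [hc'def, inv_mul_cancel_right₀ hy1', mul_add, add_mul, mul_one, mul_inv_cancel₀ hx]
  have this1 : c' * y + c' = c * y + 1 := by
    rw [hc1, ← hc'1, mul_add, mul_one]
  have key : (c - c') * y = c' - 1 := by
    rw [sub_mul, sub_eq_sub_iff_add_eq_add, ← this1, add_comm]
  rcases eq_or_ne c c' with hcc | hcc
  · have h1 : c' = 1 := by
      rw [hcc, sub_self, zero_mul, eq_comm, sub_eq_zero] at key
      exact key
    rw [hcc, h1, one_mul] at hc1
    conv_rhs => rw [hc1]
    rw [inv_mul_cancel_right₀ hx]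
  · have hd : c - c' ≠ 0 := sub_ne_zero.mpr hcc
    have hyval : y = (c - c')⁻¹ * (c' - 1) := by
      rw [← key, ← mul_assoc, inv_mul_cancel₀ hd, one_mul]
    have hxd : x * (c - c') = (c - c') * x := by
      simp [mul_sub, sub_mul, hc x, hc' x]
    have hxdi : x * (c - c')⁻¹ = (c - c')⁻¹ * x := by
      have h2 : (c - c') * (x * (c - c')⁻¹) = (c - c') * ((c - c')⁻¹ * x) := by
        rw [← mul_assoc, ← hxd, mul_assoc, mul_inv_cancel₀ hd, ← mul_assoc,
          mul_inv_cancel₀ hd, one_mul, mul_one]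
      exact mul_left_cancel₀ hd h2
    rw [hyval, ← mul_assoc, hxdi, mul_assoc, mul_assoc]
    congr 1
    simp [mul_sub, sub_mul, hc' x]
end
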